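/- arXiv:2402.08426 — 4 statements merged into one kernel-verified Lean document; each statement's English description precedes it below -/
import Mathlib

section
/- Let n ≥ 1, let U be a real orthogonal n×n matrix, let λ, f : Fin n → ℝ, let L = U · diag(λ) · Uᵀ, and let F = U · diag(f) · Uᵀ be a low-pass filter, meaning that for all indices i, j, if λᵢ ≤ λⱼ then fᵢ² ≥ fⱼ². Then for every x ∈ ℝⁿ with x ≠ 0 and Fx ≠ 0, setting z = Fx, one has zᵀLz / (zᵀz) ≤ xᵀLx / (xᵀx); that is, a low-pass filter smooths the graph signal (ΔS = S(z) − S(x) ≤ 0). -/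
open Matrix BigOperators

lemma chebyshev_aux (n : ℕ) (lam a w : Fin n → ℝ)
    (hw : ∀ i, 0 ≤ w i)
    (hlow : ∀ i j, lam i ≤ lam j → a j ≤ a i) :
    (∑ i, lam i * (a i * w i)) * (∑ i, w i) ≤
      (∑ i, lam i * w i) * (∑ i, a i * w i) := by
  have hpt : ∀ i j : Fin n, 0 ≤ w i * w j * ((lam i - lam j) * (a j - a i)) := by
    intro i j
    rcases le_total (lam i) (lam j) with h | h
    · have := hlow i j h
      have : 0 ≤ (lam i - lam j) * (a j - a i) := by nlinarith
      exact mul_nonneg (mul_nonneg (hw i) (hw j)) this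
    · have := hlow j i h
      have : 0 ≤ (lam i - lam j) * (a j - a i) :=
        mul_nonneg (by linarith) (by linarith)
      exact mul_nonneg (mul_nonneg (hw i) (hw j)) this
  have hsum : (0 : ℝ) ≤ ∑ i, ∑ j, w i * w j * ((lam i - lam j) * (a j - a i)) :=
    Finset.sum_nonneg fun i _ => Finset.sum_nonneg fun j _ => hpt i j
  have key : ∑ i, ∑ j, w i * w j * ((lam i - lam j) * (a j - a i))
      = (∑ i, lam i * w i) * (∑ i, a i * w i)
        - (∑ i, lam i * (a i * w i)) * (∑ i, w i)
        - (∑ i, w i) * (∑ i, lam i * (a i * w i))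
        + (∑ i, a i * w i) * (∑ i, lam i * w i) := by
    have step : ∀ i : Fin n, ∑ j, w i * w j * ((lam i - lam j) * (a j - a i))
        = (lam i * w i) * (∑ j, a j * w j)
          - (lam i * (a i * w i)) * (∑ j, w j)
          - (w i) * (∑ j, lam j * (a j * w j))
          + (a i * w i) * (∑ j, lam j * w j) := by
      intro i
      rw [Finset.mul_sum, Finset.mul_sum, Finset.mul_sum, Finset.mul_sum,
        ← Finset.sum_sub_distrib, ← Finset.sum_sub_distrib, ← Finset.sum_add_distrib]
      exact Finset.sum_congr rfl fun j _ => by ring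
    rw [Finset.sum_congr rfl fun i _ => step i]
    rw [Finset.sum_add_distrib, Finset.sum_sub_distrib, Finset.sum_sub_distrib,
      ← Finset.sum_mul, ← Finset.sum_mul, ← Finset.sum_mul, ← Finset.sum_mul]
  rw [key] at hsum
  linarith

theorem low_pass_filter_smooths_signal
    (n : ℕ) (hn : 1 ≤ n) (U : Matrix (Fin n) (Fin n) ℝ)
    (hU : U * Uᵀ = 1 ∧ Uᵀ * U = 1) (lam f : Fin n → ℝ)
    (L F : Matrix (Fin n) (Fin n) ℝ)
    (hL : L = U * Matrix.diagonal lam * Uᵀ)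
    (hF : F = U * Matrix.diagonal f * Uᵀ)
    (hlow : ∀ i j, lam i ≤ lam j → (f j) ^ 2 ≤ (f i) ^ 2)
    (x : Fin n → ℝ) (hx : x ≠ 0)
    (z : Fin n → ℝ) (hz : z = F *ᵥ x) (hz0 : z ≠ 0) :
    (z ⬝ᵥ (L *ᵥ z)) / (z ⬝ᵥ z) ≤ (x ⬝ᵥ (L *ᵥ x)) / (x ⬝ᵥ x) := by
  obtain ⟨hU1, hU2⟩ := hU
  set y : Fin n → ℝ := Uᵀ *ᵥ x with hy
  set v : Fin n → ℝ := fun i => f i * y i with hv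
  -- basic identities
  have hUy : U *ᵥ y = x := by
    rw [hy, mulVec_mulVec, hU1, one_mulVec]
  have hUtU : ∀ u : Fin n → ℝ, Uᵀ *ᵥ (U *ᵥ u) = u := by
    intro u; rw [mulVec_mulVec, hU2, one_mulVec]
  have hdotU : ∀ p q : Fin n → ℝ, (U *ᵥ p) ⬝ᵥ (U *ᵥ q) = p ⬝ᵥ q := by
    intro p q
    rw [dotProduct_mulVec, vecMul_mulVec, hU2, vecMul_one]
  have hdiagv : Matrix.diagonal f *ᵥ y = v := by
    ext i; rw [mulVec_diagonal]
  have hzU : z = U *ᵥ v := by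
    rw [hz, hF, ← hUy]
    rw [show (U * Matrix.diagonal f * Uᵀ) *ᵥ (U *ᵥ y)
        = U *ᵥ (Matrix.diagonal f *ᵥ (Uᵀ *ᵥ (U *ᵥ y))) by
      simp [mulVec_mulVec, Matrix.mul_assoc]]
    rw [hUtU, hdiagv]
  have hLform : ∀ u : Fin n → ℝ, (U *ᵥ u) ⬝ᵥ (L *ᵥ (U *ᵥ u)) = ∑ i, lam i * u i ^ 2 := by
    intro u
    have : L *ᵥ (U *ᵥ u) = U *ᵥ (Matrix.diagonal lam *ᵥ u) := by
      rw [hL]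
      rw [show (U * Matrix.diagonal lam * Uᵀ) *ᵥ (U *ᵥ u)
          = U *ᵥ (Matrix.diagonal lam *ᵥ (Uᵀ *ᵥ (U *ᵥ u))) by
        simp [mulVec_mulVec, Matrix.mul_assoc]]
      rw [hUtU]
    rw [this, hdotU]
    simp only [dotProduct, mulVec_diagonal]
    exact Finset.sum_congr rfl fun i _ => by ring
  -- express the four quadratic forms as sums
  have hxx : x ⬝ᵥ x = ∑ i, y i ^ 2 := by
    rw [← hUy, hdotU]
    simp only [dotProduct]
    exact Finset.sum_congr rfl fun i _ => by ring
  have hzz : z ⬝ᵥ z = ∑ i, f i ^ 2 * y i ^ 2 := by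
    rw [hzU, hdotU]
    simp only [dotProduct, hv]
    exact Finset.sum_congr rfl fun i _ => by ring
  have hxLx : x ⬝ᵥ (L *ᵥ x) = ∑ i, lam i * y i ^ 2 := by
    rw [← hUy, hLform]
  have hzLz : z ⬝ᵥ (L *ᵥ z) = ∑ i, lam i * (f i ^ 2 * y i ^ 2) := by
    rw [hzU, hLform]
    exact Finset.sum_congr rfl fun i _ => by simp only [hv]; ring
  -- positivity of denominators
  have hdnn : ∀ u : Fin n → ℝ, 0 ≤ u ⬝ᵥ u := fun u =>
    Finset.sum_nonneg fun i _ => mul_self_nonneg _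
  have hxx0 : 0 < x ⬝ᵥ x := by
    rcases lt_or_eq_of_le (hdnn x) with h | h
    · exact h
    · exact absurd (dotProduct_self_eq_zero.mp h.symm) hx
  have hzz0 : 0 < z ⬝ᵥ z := by
    rcases lt_or_eq_of_le (hdnn z) with h | h
    · exact h
    · exact absurd (dotProduct_self_eq_zero.mp h.symm) hz0
  rw [hxx, hzz, hxLx, hzLz]
  rw [hxx] at hxx0; rw [hzz] at hzz0
  rw [div_le_div_iff₀ hzz0 hxx0]
  exact chebyshev_aux n lam (fun i => f i ^ 2) (fun i => y i ^ 2)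
    (fun i => sq_nonneg _) hlow
end

section
/- Let n ≥ 1, let U be a real orthogonal n×n matrix, let λ, f : Fin n → ℝ, let L = U · diag(λ) · Uᵀ, and let F = U · diag(f) · Uᵀ be a high-pass filter, meaning that for all indices i, j, if λᵢ ≤ λⱼ then fᵢ² ≤ fⱼ². Then for every x ∈ ℝⁿ with x ≠ 0 and Fx ≠ 0, setting z = Fx, one has zᵀLz / (zᵀz) ≥ xᵀLx / (xᵀx); that is, a high-pass filter coarsens the graph signal (ΔS = S(z) − S(x) ≥ 0). -/
open Matrix BigOperators

/-!
Write `y = Uᵀ x`. In this eigenbasis `S(x)` is the mean of `λ` under the weights `yᵢ²` and `S(Fx)`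
is its mean under the reweighted weights `fᵢ² yᵢ²`. A reweighting that increases along `λ` can only
raise the mean: this is the weighted form of Chebyshev's sum inequality.
-/

section Chebyshev

variable {ι R : Type*} [Fintype ι] [CommRing R] [LinearOrder R] [IsStrictOrderedRing R]

theorem Monovary.weighted_sum_mul_sum_le {f g a : ι → R} (hfg : Monovary f g)
    (ha : ∀ i, 0 ≤ a i) :
    (∑ i, f i * a i) * (∑ i, g i * a i) ≤ (∑ i, f i * g i * a i) * ∑ i, a i := by
  have hpairs : 0 ≤ ∑ i, ∑ j, a i * a j * ((f i - f j) * (g i - g j)) :=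
    Finset.sum_nonneg fun i _ => Finset.sum_nonneg fun j _ =>
      mul_nonneg (mul_nonneg (ha i) (ha j)) (hfg.sub_mul_sub_nonneg j i)
  have hexpand : ∑ i, ∑ j, a i * a j * ((f i - f j) * (g i - g j)) =
      2 * ((∑ i, f i * g i * a i) * ∑ i, a i - (∑ i, f i * a i) * ∑ i, g i * a i) := by
    calc _ = ∑ i, ∑ j, (f i * g i * a i * a j + a i * (f j * g j * a j)
            - f i * a i * (g j * a j) - g i * a i * (f j * a j)) := by
          congr! 2; ring
      _ = _ := by
          simp only [Finset.sum_add_distrib, Finset.sum_sub_distrib, ← Finset.mul_sum,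
            ← Finset.sum_mul]
          ring
  linarith

end Chebyshev

section Spectral

variable {ι R : Type*} [Fintype ι] [DecidableEq ι] [CommRing R]

theorem dotProduct_mul_diagonal_mul_transpose_mulVec (U : Matrix ι ι R) (d x : ι → R) :
    x ⬝ᵥ ((U * diagonal d * Uᵀ) *ᵥ x) = ∑ i, d i * (Uᵀ *ᵥ x) i ^ 2 := by
  rw [← mulVec_mulVec, ← mulVec_mulVec, dotProduct_mulVec, ← mulVec_transpose]
  simp only [dotProduct, mulVec_diagonal]
  exact Finset.sum_congr rfl fun i _ => by ring

theorem dotProduct_self_eq_sum_transpose_mulVec_sq {U : Matrix ι ι R} (hU : U * Uᵀ = 1)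
    (x : ι → R) : x ⬝ᵥ x = ∑ i, (Uᵀ *ᵥ x) i ^ 2 := by
  simpa [hU] using dotProduct_mul_diagonal_mul_transpose_mulVec U 1 x

theorem transpose_mulVec_mul_diagonal_mul_transpose_mulVec {U : Matrix ι ι R}
    (hU : Uᵀ * U = 1) (d x : ι → R) :
    Uᵀ *ᵥ ((U * diagonal d * Uᵀ) *ᵥ x) = fun i => d i * (Uᵀ *ᵥ x) i := by
  rw [← mulVec_mulVec, ← mulVec_mulVec, mulVec_mulVec _ Uᵀ, hU, one_mulVec]
  exact funext (mulVec_diagonal d _)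

end Spectral

theorem high_pass_filter_coarsens_signal_general
    (n : ℕ) (U : Matrix (Fin n) (Fin n) ℝ)
    (hU : U * Uᵀ = 1 ∧ Uᵀ * U = 1) (lam f : Fin n → ℝ)
    (L F : Matrix (Fin n) (Fin n) ℝ)
    (hL : L = U * Matrix.diagonal lam * Uᵀ)
    (hF : F = U * Matrix.diagonal f * Uᵀ)
    (hhigh : ∀ i j, lam i ≤ lam j → (f i) ^ 2 ≤ (f j) ^ 2)
    (x : Fin n → ℝ) (hx : x ≠ 0)
    (z : Fin n → ℝ) (hz : z = F *ᵥ x) (hz0 : z ≠ 0) :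
    (x ⬝ᵥ (L *ᵥ x)) / (x ⬝ᵥ x) ≤ (z ⬝ᵥ (L *ᵥ z)) / (z ⬝ᵥ z) := by
  set y := Uᵀ *ᵥ x
  have hUz : Uᵀ *ᵥ z = fun i => f i * y i := by
    rw [hz, hF, transpose_mulVec_mul_diagonal_mul_transpose_mulVec hU.2]
  have hxx : 0 < x ⬝ᵥ x := by simpa using dotProduct_star_self_pos_iff.2 hx
  have hzz : 0 < z ⬝ᵥ z := by simpa using dotProduct_star_self_pos_iff.2 hz0
  have hmono : Monovary (fun i => f i ^ 2) lam := fun i j h => hhigh i j h.le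
  rw [div_le_div_iff₀ hxx hzz, hL, dotProduct_mul_diagonal_mul_transpose_mulVec,
    dotProduct_mul_diagonal_mul_transpose_mulVec,
    dotProduct_self_eq_sum_transpose_mulVec_sq hU.1 x,
    dotProduct_self_eq_sum_transpose_mulVec_sq hU.1 z, hUz]
  simpa only [mul_pow, mul_assoc] using
    hmono.symm.weighted_sum_mul_sum_le (a := fun i => y i ^ 2) fun i => sq_nonneg _

theorem high_pass_filter_coarsens_signal
    (n : ℕ) (hn : 1 ≤ n) (U : Matrix (Fin n) (Fin n) ℝ)
    (hU : U * Uᵀ = 1 ∧ Uᵀ * U = 1) (lam f : Fin n → ℝ)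
    (L F : Matrix (Fin n) (Fin n) ℝ)
    (hL : L = U * Matrix.diagonal lam * Uᵀ)
    (hF : F = U * Matrix.diagonal f * Uᵀ)
    (hhigh : ∀ i j, lam i ≤ lam j → (f i) ^ 2 ≤ (f j) ^ 2)
    (x : Fin n → ℝ) (hx : x ≠ 0)
    (z : Fin n → ℝ) (hz : z = F *ᵥ x) (hz0 : z ≠ 0) :
    (x ⬝ᵥ (L *ᵥ x)) / (x ⬝ᵥ x) ≤ (z ⬝ᵥ (L *ᵥ z)) / (z ⬝ᵥ z) :=
  high_pass_filter_coarsens_signal_general n U hU lam f L F hL hF hhigh x hx z hz hz0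
end

section
/- Let n ≥ 1 and let λ, f, y : Fin n → ℝ satisfy: (i) for all i, j, if λᵢ < λⱼ then fᵢ² > fⱼ² (strictly decreasing response on distinct frequencies); (ii) ∑ᵢ yᵢ² > 0 and ∑ᵢ fᵢ² yᵢ² > 0; and (iii) there exist indices i, j with λᵢ < λⱼ, yᵢ ≠ 0 and yⱼ ≠ 0. Then (∑ᵢ fᵢ² λᵢ yᵢ²) / (∑ᵢ fᵢ² yᵢ²) < (∑ᵢ λᵢ yᵢ²) / (∑ᵢ yᵢ²); that is, the filtered signal is strictly smoother than the original signal. -/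
open BigOperators

theorem strict_low_pass_strictly_smooths
    (n : ℕ) (hn : 1 ≤ n) (lam f y : Fin n → ℝ)
    (hdec : ∀ i j, lam i < lam j → (f j) ^ 2 < (f i) ^ 2)
    (hy : 0 < ∑ i, (y i) ^ 2)
    (hfy : 0 < ∑ i, (f i) ^ 2 * (y i) ^ 2)
    (hnd : ∃ i j, lam i < lam j ∧ y i ≠ 0 ∧ y j ≠ 0) :
    (∑ i, (f i) ^ 2 * lam i * (y i) ^ 2) / (∑ i, (f i) ^ 2 * (y i) ^ 2)
      < (∑ i, lam i * (y i) ^ 2) / (∑ i, (y i) ^ 2) := by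
  rw [div_lt_div_iff₀ hfy hy]
  set t : Fin n → Fin n → ℝ :=
    fun i j => (y i) ^ 2 * (y j) ^ 2 * (lam i - lam j) * ((f j) ^ 2 - (f i) ^ 2) with ht
  have tnonneg : ∀ i j, 0 ≤ t i j := by
    intro i j
    rcases lt_trichotomy (lam i) (lam j) with h | h | h
    · have h1 := hdec i j h
      have h2 : 0 ≤ (y i ^ 2 * y j ^ 2) * ((lam i - lam j) * ((f j) ^ 2 - (f i) ^ 2)) :=
        mul_nonneg (by positivity) (le_of_lt (mul_pos_of_neg_of_neg (by linarith) (by linarith)))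
      simp only [ht]; nlinarith [h2]
    · simp [ht, h]
    · have h1 := hdec j i h
      have h2 : 0 ≤ (y i ^ 2 * y j ^ 2) * ((lam i - lam j) * ((f j) ^ 2 - (f i) ^ 2)) :=
        mul_nonneg (by positivity) (le_of_lt (mul_pos (by linarith) (by linarith)))
      simp only [ht]; nlinarith [h2]
  obtain ⟨i0, j0, hl, hyi, hyj⟩ := hnd
  have tpos : 0 < t i0 j0 := by
    have h1 := hdec i0 j0 hl
    have h2 : 0 < (y i0) ^ 2 := by positivity
    have h3 : 0 < (y j0) ^ 2 := by positivity
    have h4 : 0 < (y i0 ^ 2 * y j0 ^ 2) * ((lam i0 - lam j0) * ((f j0) ^ 2 - (f i0) ^ 2)) :=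
      mul_pos (mul_pos h2 h3) (mul_pos_of_neg_of_neg (by linarith) (by linarith))
    simp only [ht]; nlinarith [h4]
  have key : 0 < ∑ i, ∑ j, t i j := by
    apply Finset.sum_pos'
    · intro i _
      exact Finset.sum_nonneg fun j _ => tnonneg i j
    · refine ⟨i0, Finset.mem_univ _, ?_⟩
      apply Finset.sum_pos'
      · intro j _; exact tnonneg i0 j
      · exact ⟨j0, Finset.mem_univ _, tpos⟩
  have e1 : (∑ i, lam i * (y i) ^ 2) * (∑ i, (f i) ^ 2 * (y i) ^ 2)
      = ∑ i, ∑ j, (lam i * (y i) ^ 2) * ((f j) ^ 2 * (y j) ^ 2) :=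
    Finset.sum_mul_sum _ _ _ _
  have e2 : (∑ i, (f i) ^ 2 * lam i * (y i) ^ 2) * (∑ i, (y i) ^ 2)
      = ∑ i, ∑ j, ((f i) ^ 2 * lam i * (y i) ^ 2) * ((y j) ^ 2) :=
    Finset.sum_mul_sum _ _ _ _
  have key2 : ∑ i, ∑ j, t i j
      = 2 * ((∑ i, ∑ j, (lam i * (y i) ^ 2) * ((f j) ^ 2 * (y j) ^ 2))
          - (∑ i, ∑ j, ((f i) ^ 2 * lam i * (y i) ^ 2) * ((y j) ^ 2))) := by
    have h1 : ∀ i j : Fin n, t i j =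
        ((lam i * (y i) ^ 2) * ((f j) ^ 2 * (y j) ^ 2)
          - ((f i) ^ 2 * lam i * (y i) ^ 2) * ((y j) ^ 2))
        + ((lam j * (y j) ^ 2) * ((f i) ^ 2 * (y i) ^ 2)
          - ((f j) ^ 2 * lam j * (y j) ^ 2) * ((y i) ^ 2)) := by
      intro i j; simp only [ht]; ring
    simp only [h1, Finset.sum_add_distrib, Finset.sum_sub_distrib]
    have c1 : (∑ i, ∑ j, (lam j * (y j) ^ 2) * ((f i) ^ 2 * (y i) ^ 2))
        = ∑ i, ∑ j, (lam i * (y i) ^ 2) * ((f j) ^ 2 * (y j) ^ 2) :=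
      Finset.sum_comm
    have c2 : (∑ i, ∑ j, ((f j) ^ 2 * lam j * (y j) ^ 2) * ((y i) ^ 2))
        = ∑ i, ∑ j, ((f i) ^ 2 * lam i * (y i) ^ 2) * ((y j) ^ 2) :=
      Finset.sum_comm
    rw [c1, c2]; ring
  rw [e1, e2]
  linarith [key, key2]
end

section
/- Let n ≥ 1 and let λ, f, y : Fin n → ℝ satisfy: (i) for all i, j, if λᵢ < λⱼ then fᵢ² < fⱼ² (strictly increasing response on distinct frequencies); (ii) ∑ᵢ yᵢ² > 0 and ∑ᵢ fᵢ² yᵢ² > 0; and (iii) there exist indices i, j with λᵢ < λⱼ, yᵢ ≠ 0 and yⱼ ≠ 0. Then (∑ᵢ fᵢ² λᵢ yᵢ²) / (∑ᵢ fᵢ² yᵢ²) > (∑ᵢ λᵢ yᵢ²) / (∑ᵢ yᵢ²); that is, the filtered signal is strictly coarser than the original signal. -/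
open BigOperators

theorem strict_high_pass_strictly_coarsens
    (n : ℕ) (hn : 1 ≤ n) (lam f y : Fin n → ℝ)
    (hinc : ∀ i j, lam i < lam j → (f i) ^ 2 < (f j) ^ 2)
    (hy : 0 < ∑ i, (y i) ^ 2)
    (hfy : 0 < ∑ i, (f i) ^ 2 * (y i) ^ 2)
    (hnd : ∃ i j, lam i < lam j ∧ y i ≠ 0 ∧ y j ≠ 0) :
    (∑ i, lam i * (y i) ^ 2) / (∑ i, (y i) ^ 2)
      < (∑ i, (f i) ^ 2 * lam i * (y i) ^ 2) / (∑ i, (f i) ^ 2 * (y i) ^ 2) := by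
  set A := ∑ i, (f i) ^ 2 * lam i * (y i) ^ 2 with hA
  set B := ∑ i, (y i) ^ 2 with hB
  set C := ∑ i, lam i * (y i) ^ 2 with hC
  set D := ∑ i, (f i) ^ 2 * (y i) ^ 2 with hD
  set g : Fin n → Fin n → ℝ := fun i j =>
    ((f i) ^ 2 - (f j) ^ 2) * (lam i - lam j) * (y i) ^ 2 * (y j) ^ 2 with hg
  have expand : ∀ i, ∑ j, g i j =
      (f i) ^ 2 * lam i * (y i) ^ 2 * B - (f i) ^ 2 * (y i) ^ 2 * C
        - lam i * (y i) ^ 2 * D + (y i) ^ 2 * A := by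
    intro i
    rw [hA, hB, hC, hD, Finset.mul_sum, Finset.mul_sum, Finset.mul_sum, Finset.mul_sum,
      ← Finset.sum_sub_distrib, ← Finset.sum_sub_distrib, ← Finset.sum_add_distrib]
    exact Finset.sum_congr rfl fun j _ => by simp only [hg]; ring
  have key : ∑ i, ∑ j, g i j = 2 * (A * B - C * D) := by
    rw [Finset.sum_congr rfl fun i _ => expand i]
    rw [show (2 : ℝ) * (A * B - C * D) =
        A * B - D * C - C * D + B * A by ring,
      hA, hB, hC, hD, Finset.sum_mul, Finset.sum_mul, Finset.sum_mul, Finset.sum_mul,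
      ← Finset.sum_sub_distrib, ← Finset.sum_sub_distrib, ← Finset.sum_add_distrib]
  have hnonneg : ∀ i j, 0 ≤ g i j := by
    intro i j
    rcases lt_trichotomy (lam i) (lam j) with h | h | h
    · have h2 := hinc i j h
      have : 0 < ((f i) ^ 2 - (f j) ^ 2) * (lam i - lam j) :=
        mul_pos_of_neg_of_neg (by linarith) (by linarith)
      exact mul_nonneg (mul_nonneg this.le (sq_nonneg _)) (sq_nonneg _)
    · simp [hg, h]
    · have h2 := hinc j i h
      have : 0 < ((f i) ^ 2 - (f j) ^ 2) * (lam i - lam j) :=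
        mul_pos (by linarith) (by linarith)
      exact mul_nonneg (mul_nonneg this.le (sq_nonneg _)) (sq_nonneg _)
  obtain ⟨i₀, j₀, hlt, hyi, hyj⟩ := hnd
  have hpos : 0 < ∑ i, ∑ j, g i j := by
    refine Finset.sum_pos' (fun i _ => Finset.sum_nonneg fun j _ => hnonneg i j)
      ⟨i₀, Finset.mem_univ _, ?_⟩
    refine Finset.sum_pos' (fun j _ => hnonneg i₀ j) ⟨j₀, Finset.mem_univ _, ?_⟩
    have h2 := hinc i₀ j₀ hlt
    have hy1 : 0 < (y i₀) ^ 2 := by positivity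
    have hy2 : 0 < (y j₀) ^ 2 := by positivity
    exact mul_pos (mul_pos (mul_pos_of_neg_of_neg (by linarith) (by linarith)) hy1) hy2
  rw [div_lt_div_iff₀ hy hfy]
  nlinarith [key, hpos]
end
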